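/- Let S be a countable ℵ₀-categorical semigroup, X a finite tuple of elements of S, and ρ an X-relatively automorphism preserved congruence on S. Then the quotient semigroup S/ρ is ℵ₀-categorical. -/

import Mathlib

/-- Two `n`-tuples of a semigroup are automorphically equivalent if some semigroup
automorphism maps one to the other componentwise. -/
def AutRel (S : Type*) [Semigroup S] {n : ℕ} (a b : Fin n → S) : Prop :=
  ∃ φ : S ≃* S, ∀ k, φ (a k) = b k

/-- A semigroup is ℵ₀-categorical if, for every `n ≥ 1`, the action of its automorphism
group on `n`-tuples has only finitely many orbits. -/
def Aleph0Categorical (S : Type*) [Semigroup S] : Prop :=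
  ∀ n : ℕ, 1 ≤ n → ∃ t : Set (Fin n → S), t.Finite ∧
    ∀ a : Fin n → S, ∃ b ∈ t, AutRel S b a

/-- A congruence `c` on `S` is `X`-relatively automorphism preserved if every automorphism
of `S` fixing each entry of the tuple `X` preserves `c`. -/
def IsRAP {S : Type*} [Semigroup S] {t : ℕ} (X : Fin t → S) (c : Con S) : Prop :=
  ∀ φ : S ≃* S, (∀ i, φ (X i) = X i) → ∀ a b : S, c a b ↔ c (φ a) (φ b)

/-
A tuple `ā` of `S/ρ` lifts to a tuple `a` of `S`; the orbit of `a ++ X` under `Aut S` is one of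
finitely many, and an automorphism taking one `a' ++ X` to another fixes `X`, hence preserves `ρ`
and descends to an automorphism of `S/ρ`. So the images in `S/ρ` of finitely many
representatives `a'` cover all orbits of `n`-tuples of `S/ρ`.
-/

section

variable {S : Type*} [Semigroup S]

theorem AutRel.refl {n : ℕ} (a : Fin n → S) : AutRel S a a :=
  ⟨MulEquiv.refl S, fun _ => rfl⟩

theorem autRel_append_iff {n t : ℕ} (X : Fin t → S) (a b : Fin n → S) :
    AutRel S (Fin.append a X) (Fin.append b X) ↔
      ∃ φ : S ≃* S, (∀ i, φ (X i) = X i) ∧ ∀ k, φ (a k) = b k := by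
  simp only [AutRel, Fin.forall_fin_add, Fin.append_left, Fin.append_right, and_comm]

theorem Aleph0Categorical.exists_finite_append (hcat : Aleph0Categorical S) (n : ℕ)
    {t : ℕ} (X : Fin t → S) :
    ∃ R : Set (Fin n → S), R.Finite ∧
      ∀ a, ∃ r ∈ R, AutRel S (Fin.append r X) (Fin.append a X) := by
  rcases Nat.eq_zero_or_pos (n + t) with h | h
  · obtain rfl : n = 0 := by omega
    exact ⟨Set.univ, Set.finite_univ, fun a => ⟨a, Set.mem_univ a, AutRel.refl _⟩⟩
  obtain ⟨T, hT, hTcov⟩ := hcat (n + t) h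
  let T' := {b | b ∈ T ∧ ∃ a : Fin n → S, AutRel S b (Fin.append a X)}
  have : Finite T' := (hT.subset fun _ hb => hb.1).to_subtype
  refine ⟨Set.range fun b : T' => b.2.2.choose, Set.finite_range _, fun a => ?_⟩
  obtain ⟨b, hbT, hb⟩ := hTcov (Fin.append a X)
  let b' : T' := ⟨b, hbT, a, hb⟩
  obtain ⟨φ, hφ⟩ := b'.2.2.choose_spec
  refine ⟨_, Set.mem_range_self b', ?_⟩
  obtain ⟨ψ, hψ⟩ := hb
  refine ⟨φ.symm.trans ψ, fun k => ?_⟩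
  rw [MulEquiv.trans_apply, ← hφ k, MulEquiv.symm_apply_apply]
  exact hψ k

theorem IsRAP.autRel_quotient {t n : ℕ} {X : Fin t → S} {ρ : Con S} (hrap : IsRAP X ρ)
    {a b : Fin n → S} (h : AutRel S (Fin.append a X) (Fin.append b X)) :
    AutRel ρ.Quotient (fun k => (a k : ρ.Quotient)) (fun k => (b k : ρ.Quotient)) := by
  obtain ⟨φ, hX, hab⟩ := (autRel_append_iff X a b).mp h
  have hφ : ρ = ρ.comap φ (map_mul φ) := Con.ext (hrap φ hX)
  exact ⟨Con.congr φ hφ, fun k => by rw [Con.congr_mk, hab k]⟩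

end

theorem aleph0Categorical_quotient_rap (S : Type*) [Semigroup S]
    (hcat : Aleph0Categorical S) {t : ℕ} (X : Fin t → S) (ρ : Con S)
    (hrap : IsRAP X ρ) :
    Aleph0Categorical ρ.Quotient := by
  intro n _
  obtain ⟨R, hR, hRcov⟩ := hcat.exists_finite_append n X
  refine ⟨(fun r k => (r k : ρ.Quotient)) '' R, hR.image _, fun c => ?_⟩
  obtain ⟨a, rfl⟩ : ∃ a : Fin n → S, (fun k => (a k : ρ.Quotient)) = c :=
    ⟨fun k => (c k).out, funext fun k => Quotient.out_eq (c k)⟩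
  obtain ⟨r, hr, hra⟩ := hRcov a
  exact ⟨_, Set.mem_image_of_mem _ hr, hrap.autRel_quotient hra⟩
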